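/- General loss bound: let the losses be time- and history-dependent with values l^t_{x_t y_t}(x_{<t}) ∈ [l_min, l_min + l_Δ], where l_Δ > 0. Then for every n ≥ 1, 0 ≤ L_{nΛξ} − L_{nΛμ} ≤ l_Δ H_n + √(4 (L_{nΛμ} − n l_min) l_Δ H_n + l_Δ² H_n²), where H_n ≤ ln(1/w_μ). -/

import Mathlib

/-!
Fix a history and let `p`, `q` be the probabilities that `μ` and `ξ` give to the next bit
being `1`. Because `Λ_ξ` is optimal for `q`, its excess `μ`-expected loss `δ` over any other
action is controlled by the distance from `p` to `q`: the strong-convexity bound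
`(q - p)² / (2V) ≤ KL(p ‖ q)`, with `V` a bound for `t (1 - t)` between `p` and `q`, gives
`δ² ≤ 2 lΔ h (2 m + δ)`, where `h = KL(p ‖ q)` and `m` is the `μ`-expected loss of the other
action minus `lmin`. Solving the quadratic gives `δ ≤ lΔ h + √(4 m lΔ h + lΔ² h²)`. The right
side is positively homogeneous and concave in `(m, h)` (Cauchy–Schwarz), so the bound survives
taking `μ`-expectations and summing over time. Finally, the chain rule turns `H_n` into the
relative entropy of `μ` to `ξ` on strings of length `n`, which is at most `ln (1 / w_μ)`
because `ξ ≥ w_μ μ`.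
-/

open Finset Filter

/-- A probability distribution on finite binary strings:
nonnegative, `1` on the empty string, and additive under one-symbol extension. -/
def IsDistr (ρ : List Bool → ℝ) : Prop :=
  (∀ x, 0 ≤ ρ x) ∧ ρ [] = 1 ∧
    ∀ x, ρ x = ρ (x ++ [false]) + ρ (x ++ [true])

/-- Conditional probability `ρ(b | x) = ρ(xb)/ρ(x)` (junk `0` when `ρ x = 0`). -/
noncomputable def condP (ρ : List Bool → ℝ) (x : List Bool) (b : Bool) : ℝ :=
  ρ (x ++ [b]) / ρ x

/-- Instantaneous relative entropy
`h_t(x) = ∑_b μ(b|x) ln (μ(b|x)/ξ(b|x))` (conventions `0·ln 0 = 0` are automatic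
since `Real.log 0 = 0` and `r/0 = 0`). -/
noncomputable def instEnt (μ ξ : List Bool → ℝ) (x : List Bool) : ℝ :=
  ∑ b : Bool, condP μ x b * Real.log (condP μ x b / condP ξ x b)

/-- Total relative entropy `H_n = ∑_{t=1}^n ∑_{x_{<t}} μ(x_{<t}) h_t(x_{<t})`
(histories of length `t-1`, i.e. length `t ∈ {0,…,n-1}`). -/
noncomputable def totalEnt (μ ξ : List Bool → ℝ) (n : ℕ) : ℝ :=
  ∑ t ∈ Finset.range n, ∑ x : Fin t → Bool,
    μ (List.ofFn x) * instEnt μ ξ (List.ofFn x)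

/-- `ρ`-expected loss of predicting `y` after history `x`. -/
noncomputable def expLoss (ρ : List Bool → ℝ) (l : Bool → Bool → ℝ)
    (x : List Bool) (y : Bool) : ℝ :=
  ∑ b : Bool, condP ρ x b * l b y

/-- `Y` is a fixed choice of minimizers for the scheme `Λ_ρ`. -/
def IsPredictor (ρ : List Bool → ℝ) (l : Bool → Bool → ℝ)
    (Y : List Bool → Bool) : Prop :=
  ∀ x y, expLoss ρ l x (Y x) ≤ expLoss ρ l x y

/-- Total `μ`-expected loss `L_{nΛ}` of the scheme with minimizers `Y`. -/
noncomputable def totalLoss (μ : List Bool → ℝ) (l : Bool → Bool → ℝ)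
    (Y : List Bool → Bool) (n : ℕ) : ℝ :=
  ∑ t ∈ Finset.range n, ∑ x : Fin t → Bool,
    μ (List.ofFn x) * expLoss μ l (List.ofFn x) (Y (List.ofFn x))

/-- `ρ`-expected loss of action `y` after history `x`, for a time- and
history-dependent loss `l` (the history `x` also encodes the time `t` via
its length). -/
noncomputable def expLossG (ρ : List Bool → ℝ) (l : List Bool → Bool → Bool → ℝ)
    (x : List Bool) (y : Bool) : ℝ :=
  ∑ b : Bool, condP ρ x b * l x b y

/-- `Y` is a fixed choice of minimizers for the scheme `Λ_ρ` with general loss. -/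
def IsPredictorG (ρ : List Bool → ℝ) (l : List Bool → Bool → Bool → ℝ)
    (Y : List Bool → Bool) : Prop :=
  ∀ x y, expLossG ρ l x (Y x) ≤ expLossG ρ l x y

/-- Total `μ`-expected loss for a general loss function. -/
noncomputable def totalLossG (μ : List Bool → ℝ) (l : List Bool → Bool → Bool → ℝ)
    (Y : List Bool → Bool) (n : ℕ) : ℝ :=
  ∑ t ∈ Finset.range n, ∑ x : Fin t → Bool,
    μ (List.ofFn x) * expLossG μ l (List.ofFn x) (Y (List.ofFn x))

open Real

noncomputable def binKL (p q : ℝ) : ℝ :=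
  p * log (p / q) + (1 - p) * log ((1 - p) / (1 - q))

lemma binKL_one_sub (p q : ℝ) : binKL (1 - p) (1 - q) = binKL p q := by
  simp only [binKL, sub_sub_cancel]
  ring

lemma binKL_self (p : ℝ) : binKL p p = 0 := by
  rcases eq_or_ne p 0 with rfl | hp
  · simp [binKL]
  rcases eq_or_ne (1 - p) 0 with hp' | hp'
  · simp [binKL, hp', div_self hp]
  · simp [binKL, div_self hp, div_self hp']

lemma mul_log_div_eq (a : ℝ) {b : ℝ} (hb : b ≠ 0) : a * log (a / b) = a * (log a - log b) := by
  rcases eq_or_ne a 0 with rfl | ha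
  · simp
  · rw [log_div ha hb]

/-- On `[p, q]` the derivative of `binKL p` is `(x - p) / (x * (1 - x)) ≥ (x - p) / V`. -/
lemma sq_div_le_binKL {p q V : ℝ} (hp0 : 0 ≤ p) (hpq : p < q) (hq1 : q < 1)
    (hV : ∀ t ∈ Set.Icc p q, t * (1 - t) ≤ V) (hV0 : 0 < V) :
    (q - p) ^ 2 / (2 * V) ≤ binKL p q := by
  set F : ℝ → ℝ := fun x => p * (log p - log x) + (1 - p) * (log (1 - p) - log (1 - x))
    - (x - p) ^ 2 / (2 * V) with hF
  have hcont : ContinuousOn F (Set.Icc p q) := by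
    have hlog : ContinuousOn (fun x => p * (log p - log x)) (Set.Icc p q) := by
      rcases hp0.eq_or_lt with rfl | hp
      · simpa using continuousOn_const
      · exact continuousOn_const.mul (continuousOn_const.sub
          (continuousOn_log.mono fun x hx => (hp.trans_le hx.1).ne'))
    have hlog' : ContinuousOn (fun x => log (1 - x)) (Set.Icc p q) :=
      continuousOn_log.comp (by fun_prop) fun x hx => sub_ne_zero.2 (by linarith [hx.2])
    exact (hlog.add (continuousOn_const.mul (continuousOn_const.sub hlog'))).sub (by fun_prop)
  have hderiv : ∀ x ∈ Set.Ioo p q,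
      HasDerivAt F ((x - p) / (x * (1 - x)) - (x - p) / V) x := by
    intro x ⟨hpx, hxq⟩
    have hx0 : 0 < x := hp0.trans_lt hpx
    have hx1 : 0 < 1 - x := by linarith
    have h := (((hasDerivAt_log hx0.ne').const_sub (log p)).const_mul p).add
      ((((hasDerivAt_id x).const_sub 1).log hx1.ne').const_sub (log (1 - p)) |>.const_mul (1 - p))
      |>.sub ((((hasDerivAt_id x).sub_const p).pow 2).div_const (2 * V))
    refine h.congr_deriv ?_
    simp only [id]
    field_simp
    ring
  have hmono : MonotoneOn F (Set.Icc p q) := by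
    refine monotoneOn_of_deriv_nonneg (convex_Icc p q) hcont
      (fun x hx => ?_) (fun x hx => ?_) <;> rw [interior_Icc] at hx
    · exact (hderiv x hx).differentiableAt.differentiableWithinAt
    · rw [(hderiv x hx).deriv, sub_nonneg]
      exact div_le_div_of_nonneg_left (by linarith [hx.1])
        (mul_pos (hp0.trans_lt hx.1) (by linarith [hx.2])) (hV x (Set.Ioo_subset_Icc_self hx))
  have hFq := hmono (Set.left_mem_Icc.2 hpq.le) (Set.right_mem_Icc.2 hpq.le) hpq.le
  simp only [hF, sub_self, mul_zero, add_zero, ne_eq, OfNat.ofNat_ne_zero, not_false_eq_true,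
    zero_pow, zero_div] at hFq
  rw [binKL, mul_log_div_eq p (hp0.trans_lt hpq).ne', mul_log_div_eq (1 - p) (by linarith)]
  linarith

lemma binKL_nonneg {p q : ℝ} (hp0 : 0 ≤ p) (hp1 : p ≤ 1) (hq0 : 0 ≤ q) (hq1 : q ≤ 1)
    (hpq0 : 0 < p → 0 < q) (hpq1 : p < 1 → q < 1) : 0 ≤ binKL p q := by
  have key : ∀ p q : ℝ, 0 ≤ p → p < q → q < 1 → 0 ≤ binKL p q := fun p q hp0 hpq hq1 =>
    (div_nonneg (sq_nonneg (q - p)) (by norm_num : (0 : ℝ) ≤ 2 * 1)).trans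
      (sq_div_le_binKL hp0 hpq hq1 (fun t _ => by nlinarith [sq_nonneg (t - 1 / 2)]) one_pos)
  rcases lt_trichotomy p q with hpq | rfl | hqp
  · exact key p q hp0 hpq (hpq1 (hpq.trans_le hq1))
  · exact (binKL_self p).ge
  · rw [← binKL_one_sub]
    exact key _ _ (by linarith) (by linarith) (by linarith [hpq0 (hq0.trans_lt hqp)])

lemma mul_one_sub_le_max {p q t : ℝ} (hpt : p ≤ t) (htq : t ≤ q) (hq1 : q ≤ 1) :
    t * (1 - t) ≤ max (q * (1 - q)) (q * (q + p - 2 * p * q)) := by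
  rcases le_or_gt q (1 / 2) with hq | hq
  · exact le_max_of_le_left (by nlinarith)
  · refine le_max_of_le_right ?_
    nlinarith [mul_le_mul_of_nonneg_left hpt (by linarith : (0 : ℝ) ≤ 2 * q - 1),
      sq_nonneg (t - (1 + 2 * q ^ 2 - q) / 2), mul_nonneg (by linarith : (0 : ℝ) ≤ 2 * q - 1)
        (by linarith : (0 : ℝ) ≤ 1 - q)]

lemma sq_le_two_binKL_mul {p q A B : ℝ} (hp0 : 0 ≤ p) (hq1 : q ≤ 1) (hpq1 : p < 1 → q < 1)
    (hA1 : A ≤ 1) (hB1 : -1 ≤ B) (hBA : B < A)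
    (hcon : (1 - q) * A + q * B ≤ 0) (hs : 0 < (1 - p) * A + p * B) :
    ((1 - p) * A + p * B) ^ 2 ≤ 2 * binKL p q * ((1 - p) * A - p * B) := by
  set s := (1 - p) * A + p * B
  set W := (1 - p) * A - p * B with hW
  have hpq : p < q := by nlinarith
  have hq1' : q < 1 := hpq1 (hpq.trans_le hq1)
  have hq0 : 0 < q := hp0.trans_lt hpq
  have hA0 : 0 < A := by nlinarith
  have hB0 : B ≤ 0 := by nlinarith
  have hqs : q * s ≤ A * (q - p) := by nlinarith [mul_le_mul_of_nonneg_left hcon hp0]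
  have hBAW : -B * A ≤ W := by
    nlinarith [mul_nonneg (mul_nonneg (by linarith : 0 ≤ 1 - p) hA0.le) (by linarith : 0 ≤ 1 + B),
      mul_nonneg (mul_nonneg hp0 (by linarith : 0 ≤ -B)) (by linarith : 0 ≤ 1 - A)]
  have hW₁ : (1 - q) * A ^ 2 ≤ q * W := by
    nlinarith [mul_le_mul_of_nonneg_right hcon hA0.le, mul_le_mul_of_nonneg_left hBAW hq0.le]
  have hW₂ : (q + p - 2 * p * q) * A ^ 2 ≤ q * W := by
    nlinarith [mul_le_mul_of_nonneg_left hcon hp0, mul_nonneg (by nlinarith : 0 ≤ q + p - 2 * p * q)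
      (mul_nonneg hA0.le (by linarith : 0 ≤ 1 - A))]
  -- Since `q * s ≤ A * (q - p)`, it suffices to bound `t * (1 - t)` on `[p, q]` by some `V`
  -- with `V * A ^ 2 ≤ q ^ 2 * W`; `hW₁` and `hW₂` give two candidates.
  set V := max (q * (1 - q)) (q * (q + p - 2 * p * q))
  have hV0 : 0 < V := lt_max_of_lt_left (by nlinarith)
  have hVW : V * A ^ 2 ≤ q ^ 2 * W := by
    rw [max_mul_of_nonneg _ _ (sq_nonneg A)]
    exact max_le (by nlinarith) (by nlinarith)
  have hVs : V * s ^ 2 ≤ (q - p) ^ 2 * W := by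
    refine le_of_mul_le_mul_left ?_ (pow_pos hq0 2)
    nlinarith [mul_le_mul_of_nonneg_left hVW (sq_nonneg (q - p)),
      mul_le_mul_of_nonneg_left (pow_le_pow_left₀ (by positivity) hqs 2) hV0.le]
  have hD := sq_div_le_binKL hp0 hpq hq1'
    (fun t ht => mul_one_sub_le_max ht.1 ht.2 hq1) hV0
  rw [div_le_iff₀ (by positivity)] at hD
  nlinarith [mul_le_mul_of_nonneg_right hD (by nlinarith : 0 ≤ W)]

lemma binary_regret_le_sqrt {p q u₀ u₁ v₀ v₁ : ℝ} (hp0 : 0 ≤ p) (hp1 : p ≤ 1) (hq0 : 0 ≤ q)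
    (hq1 : q ≤ 1) (hpq0 : 0 < p → 0 < q) (hpq1 : p < 1 → q < 1)
    (hu₀ : u₀ ∈ Set.Icc (0 : ℝ) 1) (hu₁ : u₁ ∈ Set.Icc (0 : ℝ) 1)
    (hv₀ : v₀ ∈ Set.Icc (0 : ℝ) 1) (hv₁ : v₁ ∈ Set.Icc (0 : ℝ) 1)
    (hcon : (1 - q) * (v₀ - u₀) + q * (v₁ - u₁) ≤ 0) :
    (1 - p) * (v₀ - u₀) + p * (v₁ - u₁) ≤
      √(2 * binKL p q * ((1 - p) * (u₀ + v₀) + p * (u₁ + v₁))) := by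
  rcases le_or_gt ((1 - p) * (v₀ - u₀) + p * (v₁ - u₁)) 0 with hs | hs
  · exact hs.trans (sqrt_nonneg _)
  refine le_sqrt_of_sq_le ?_
  have hD : 0 ≤ 2 * binKL p q := mul_nonneg zero_le_two (binKL_nonneg hp0 hp1 hq0 hq1 hpq0 hpq1)
  obtain ⟨hu₀0, hu₀1⟩ := hu₀; obtain ⟨hu₁0, hu₁1⟩ := hu₁
  obtain ⟨hv₀0, hv₀1⟩ := hv₀; obtain ⟨hv₁0, hv₁1⟩ := hv₁
  rcases lt_trichotomy (v₁ - u₁) (v₀ - u₀) with hlt | heq | hgt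
  · calc _ ≤ 2 * binKL p q * ((1 - p) * (v₀ - u₀) - p * (v₁ - u₁)) :=
          sq_le_two_binKL_mul hp0 hq1 hpq1 (by linarith) (by linarith) hlt hcon hs
      _ ≤ _ := mul_le_mul_of_nonneg_left (by nlinarith) hD
  · rw [heq] at hcon hs
    linarith
  · -- exchanging the two outcomes replaces `p, q` by `1 - p, 1 - q`
    have h := sq_le_two_binKL_mul (p := 1 - p) (q := 1 - q) (A := v₁ - u₁) (B := v₀ - u₀)
      (by linarith) (by linarith) (fun h => by linarith [hpq0 (by linarith)])
      (by linarith) (by linarith) hgt (by linarith) (by linarith)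
    rw [binKL_one_sub, sub_sub_cancel] at h
    calc _ = (p * (v₁ - u₁) + (1 - p) * (v₀ - u₀)) ^ 2 := by ring
      _ ≤ 2 * binKL p q * (p * (v₁ - u₁) - (1 - p) * (v₀ - u₀)) := h
      _ ≤ _ := mul_le_mul_of_nonneg_left (by nlinarith) hD

/-- The larger root `δ` of `δ ^ 2 = 2 * c * a * (2 * m + δ)`. -/
noncomputable def regretBound (c m a : ℝ) : ℝ := c * a + √(4 * m * c * a + c ^ 2 * a ^ 2)

lemma le_regretBound_of_le_sqrt {c m a δ : ℝ} (hca : 0 ≤ c * a)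
    (h : δ ≤ √(2 * c * a * (2 * m + δ))) : δ ≤ regretBound c m a := by
  unfold regretBound
  rcases le_or_gt δ (c * a) with hδ | hδ
  · linarith [sqrt_nonneg (4 * m * c * a + c ^ 2 * a ^ 2)]
  · have hsq := (le_sqrt' (hca.trans_lt hδ)).1 h
    linarith [le_sqrt_of_sq_le (show (δ - c * a) ^ 2 ≤ 4 * m * c * a + c ^ 2 * a ^ 2 by nlinarith)]

lemma mul_regretBound {k : ℝ} (hk : 0 ≤ k) (c m a : ℝ) :
    k * regretBound c m a = regretBound c (k * m) (k * a) := by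
  unfold regretBound
  rw [show 4 * (k * m) * c * (k * a) + c ^ 2 * (k * a) ^ 2
      = k ^ 2 * (4 * m * c * a + c ^ 2 * a ^ 2) by ring, sqrt_mul (sq_nonneg k), sqrt_sq hk]
  ring

/-- Concavity of the positively homogeneous function `(m, a) ↦ regretBound c m a`,
via Cauchy–Schwarz. -/
lemma sum_regretBound_le {ι : Type*} (s : Finset ι) {c : ℝ} (hc : 0 ≤ c) {m a : ι → ℝ}
    (hm : ∀ i, 0 ≤ m i) (ha : ∀ i, 0 ≤ a i) :
    ∑ i ∈ s, regretBound c (m i) (a i) ≤ regretBound c (∑ i ∈ s, m i) (∑ i ∈ s, a i) := by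
  unfold regretBound
  rw [sum_add_distrib, ← mul_sum]
  gcongr
  calc ∑ i ∈ s, √(4 * m i * c * a i + c ^ 2 * a i ^ 2)
      = ∑ i ∈ s, √(a i) * √(4 * m i * c + c ^ 2 * a i) :=
        sum_congr rfl fun i _ => by rw [← sqrt_mul (ha i)]; ring_nf
    _ ≤ √(∑ i ∈ s, a i) * √(∑ i ∈ s, (4 * m i * c + c ^ 2 * a i)) :=
        Real.sum_sqrt_mul_sqrt_le s ha fun i => by have := hm i; have := ha i; positivity
    _ = √(4 * (∑ i ∈ s, m i) * c * (∑ i ∈ s, a i) + c ^ 2 * (∑ i ∈ s, a i) ^ 2) := by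
        rw [← sqrt_mul (sum_nonneg fun i _ => ha i), sum_add_distrib, ← sum_mul, ← mul_sum,
          ← mul_sum]
        ring_nf

lemma binary_regret_le {p q lmin c u₀ u₁ v₀ v₁ : ℝ} (hp0 : 0 ≤ p) (hp1 : p ≤ 1) (hq0 : 0 ≤ q)
    (hq1 : q ≤ 1) (hpq0 : 0 < p → 0 < q) (hpq1 : p < 1 → q < 1) (hc : 0 < c)
    (hu₀ : u₀ ∈ Set.Icc lmin (lmin + c)) (hu₁ : u₁ ∈ Set.Icc lmin (lmin + c))
    (hv₀ : v₀ ∈ Set.Icc lmin (lmin + c)) (hv₁ : v₁ ∈ Set.Icc lmin (lmin + c))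
    (hopt : (1 - q) * v₀ + q * v₁ ≤ (1 - q) * u₀ + q * u₁) :
    (1 - p) * v₀ + p * v₁ - ((1 - p) * u₀ + p * u₁) ≤
      regretBound c ((1 - p) * u₀ + p * u₁ - lmin) (binKL p q) := by
  have hnorm : ∀ u ∈ Set.Icc lmin (lmin + c), (u - lmin) / c ∈ Set.Icc (0 : ℝ) 1 :=
    fun u hu => ⟨div_nonneg (by linarith [hu.1]) hc.le, (div_le_one hc).2 (by linarith [hu.2])⟩
  have hcon : (1 - q) * ((v₀ - lmin) / c - (u₀ - lmin) / c)
      + q * ((v₁ - lmin) / c - (u₁ - lmin) / c) ≤ 0 := by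
    rw [show (1 - q) * ((v₀ - lmin) / c - (u₀ - lmin) / c) + q * ((v₁ - lmin) / c - (u₁ - lmin) / c)
      = ((1 - q) * v₀ + q * v₁ - ((1 - q) * u₀ + q * u₁)) / c by field_simp; ring]
    exact div_nonpos_of_nonpos_of_nonneg (by linarith) hc.le
  have h := binary_regret_le_sqrt hp0 hp1 hq0 hq1 hpq0 hpq1 (hnorm u₀ hu₀) (hnorm u₁ hu₁)
    (hnorm v₀ hv₀) (hnorm v₁ hv₁) hcon
  refine le_regretBound_of_le_sqrt (mul_nonneg hc.le (binKL_nonneg hp0 hp1 hq0 hq1 hpq0 hpq1)) ?_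
  calc _ = c * ((1 - p) * ((v₀ - lmin) / c - (u₀ - lmin) / c)
          + p * ((v₁ - lmin) / c - (u₁ - lmin) / c)) := by field_simp; ring
    _ ≤ c * √(2 * binKL p q * ((1 - p) * ((u₀ - lmin) / c + (v₀ - lmin) / c)
          + p * ((u₁ - lmin) / c + (v₁ - lmin) / c))) := mul_le_mul_of_nonneg_left h hc.le
    _ = √(c ^ 2 * (2 * binKL p q * ((1 - p) * ((u₀ - lmin) / c + (v₀ - lmin) / c)
          + p * ((u₁ - lmin) / c + (v₁ - lmin) / c)))) := by
        rw [sqrt_mul (sq_nonneg c), sqrt_sq hc.le]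
    _ = _ := by
        congr 1
        field_simp
        ring

namespace IsDistr

variable {ρ : List Bool → ℝ}

lemma mul_nonneg_of_pos (hρ : IsDistr ρ) {x : List Bool} {r : ℝ} (h : 0 < ρ x → 0 ≤ r) :
    0 ≤ ρ x * r :=
  (hρ.1 x).eq_or_lt.elim (fun h0 => by simp [← h0]) fun hx => mul_nonneg hx.le (h hx)

lemma condP_nonneg (hρ : IsDistr ρ) (x : List Bool) (b : Bool) : 0 ≤ condP ρ x b :=
  div_nonneg (hρ.1 _) (hρ.1 x)

lemma condP_false (hρ : IsDistr ρ) {x : List Bool} (hx : 0 < ρ x) :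
    condP ρ x false = 1 - condP ρ x true := by
  rw [eq_sub_iff_add_eq, condP, condP, ← add_div, ← hρ.2.2 x, div_self hx.ne']

lemma condP_le_one (hρ : IsDistr ρ) (x : List Bool) (b : Bool) : condP ρ x b ≤ 1 := by
  rcases (hρ.1 x).eq_or_lt with hx | hx
  · simp [condP, ← hx]
  · rw [condP, div_le_one hx, hρ.2.2 x]
    cases b <;> linarith [hρ.1 (x ++ [false]), hρ.1 (x ++ [true])]

lemma pos_of_condP_pos (hρ : IsDistr ρ) {x : List Bool} {b : Bool} (h : 0 < condP ρ x b) :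
    0 < ρ (x ++ [b]) :=
  (hρ.1 _).lt_of_ne fun h0 => by simp [condP, ← h0] at h

lemma expLossG_eq (hρ : IsDistr ρ) {x : List Bool} (hx : 0 < ρ x)
    (l : List Bool → Bool → Bool → ℝ) (y : Bool) :
    expLossG ρ l x y = (1 - condP ρ x true) * l x false y + condP ρ x true * l x true y := by
  rw [expLossG, Fintype.sum_bool, hρ.condP_false hx, add_comm]

lemma lmin_le_expLossG (hρ : IsDistr ρ) {x : List Bool} (hx : 0 < ρ x)
    {l : List Bool → Bool → Bool → ℝ} {lmin : ℝ} {y : Bool} (hl : ∀ a, lmin ≤ l x a y) :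
    lmin ≤ expLossG ρ l x y := by
  rw [hρ.expLossG_eq hx]
  nlinarith [hl false, hl true, hρ.condP_nonneg x true, hρ.condP_le_one x true]

end IsDistr

lemma isDistr_of_hasSum {ι : Type*} {μs : ι → List Bool → ℝ} {w : ι → ℝ} {ξ : List Bool → ℝ}
    (hμs : ∀ i, IsDistr (μs i)) (hw : ∀ i, 0 ≤ w i) (hw1 : HasSum w 1)
    (hξ : ∀ x, HasSum (fun i => w i * μs i x) (ξ x)) : IsDistr ξ := by
  refine ⟨fun x => hasSum_le (fun i => mul_nonneg (hw i) ((hμs i).1 x)) hasSum_zero (hξ x),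
    (hξ []).unique ?_, fun x => (hξ x).unique ?_⟩
  · simpa [(hμs _).2.1] using hw1
  · simpa [(hμs _).2.2 x, mul_add] using (hξ (x ++ [false])).add (hξ (x ++ [true]))

section Dominance

variable {μ ξ : List Bool → ℝ} {x : List Bool}

lemma condP_pos_of_dom (hμ : IsDistr μ) (hdom : ∀ y, 0 < μ y → 0 < ξ y) (hx : 0 < μ x)
    {b : Bool} (h : 0 < condP μ x b) : 0 < condP ξ x b :=
  div_pos (hdom _ (hμ.pos_of_condP_pos h)) (hdom x hx)

lemma condP_lt_one_of_dom (hμ : IsDistr μ) (hξ : IsDistr ξ) (hdom : ∀ y, 0 < μ y → 0 < ξ y)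
    (hx : 0 < μ x) (h : condP μ x true < 1) : condP ξ x true < 1 := by
  have := condP_pos_of_dom hμ hdom hx (b := false) (by rw [hμ.condP_false hx]; linarith)
  rw [hξ.condP_false (hdom x hx)] at this
  linarith

lemma instEnt_eq_binKL (hμ : IsDistr μ) (hξ : IsDistr ξ) (hdom : ∀ y, 0 < μ y → 0 < ξ y)
    (hx : 0 < μ x) : instEnt μ ξ x = binKL (condP μ x true) (condP ξ x true) := by
  rw [instEnt, Fintype.sum_bool, hμ.condP_false hx, hξ.condP_false (hdom x hx), binKL, add_comm]

lemma instEnt_nonneg (hμ : IsDistr μ) (hξ : IsDistr ξ) (hdom : ∀ y, 0 < μ y → 0 < ξ y)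
    (hx : 0 < μ x) : 0 ≤ instEnt μ ξ x := by
  rw [instEnt_eq_binKL hμ hξ hdom hx]
  exact binKL_nonneg (hμ.condP_nonneg x true) (hμ.condP_le_one x true) (hξ.condP_nonneg x true)
    (hξ.condP_le_one x true) (condP_pos_of_dom hμ hdom hx) (condP_lt_one_of_dom hμ hξ hdom hx)

lemma expLossG_sub_le_regretBound (hμ : IsDistr μ) (hξ : IsDistr ξ)
    (hdom : ∀ y, 0 < μ y → 0 < ξ y) {l : List Bool → Bool → Bool → ℝ} {lmin lΔ : ℝ}
    (hlΔ : 0 < lΔ) (hl : ∀ x a y, l x a y ∈ Set.Icc lmin (lmin + lΔ)) {Yξ : List Bool → Bool}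
    (hYξ : IsPredictorG ξ l Yξ) (hx : 0 < μ x) (y : Bool) :
    expLossG μ l x (Yξ x) - expLossG μ l x y ≤
      regretBound lΔ (expLossG μ l x y - lmin) (instEnt μ ξ x) := by
  have hopt := hYξ x y
  rw [hξ.expLossG_eq (hdom x hx), hξ.expLossG_eq (hdom x hx)] at hopt
  rw [hμ.expLossG_eq hx, hμ.expLossG_eq hx, instEnt_eq_binKL hμ hξ hdom hx]
  exact binary_regret_le (hμ.condP_nonneg x true) (hμ.condP_le_one x true)
    (hξ.condP_nonneg x true) (hξ.condP_le_one x true) (condP_pos_of_dom hμ hdom hx)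
    (condP_lt_one_of_dom hμ hξ hdom hx) hlΔ (hl _ _ _) (hl _ _ _) (hl _ _ _) (hl _ _ _) hopt

lemma mul_expLossG_sub_le_regretBound (hμ : IsDistr μ) (hξ : IsDistr ξ)
    (hdom : ∀ y, 0 < μ y → 0 < ξ y) {l : List Bool → Bool → Bool → ℝ} {lmin lΔ : ℝ}
    (hlΔ : 0 < lΔ) (hl : ∀ x a y, l x a y ∈ Set.Icc lmin (lmin + lΔ)) {Yξ : List Bool → Bool}
    (hYξ : IsPredictorG ξ l Yξ) (x : List Bool) (y : Bool) :
    μ x * (expLossG μ l x (Yξ x) - expLossG μ l x y) ≤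
      regretBound lΔ (μ x * (expLossG μ l x y - lmin)) (μ x * instEnt μ ξ x) := by
  rcases (hμ.1 x).eq_or_lt with h0 | hx
  · simp [← h0, regretBound]
  · rw [← mul_regretBound hx.le]
    exact mul_le_mul_of_nonneg_left
      (expLossG_sub_le_regretBound hμ hξ hdom hlΔ hl hYξ hx y) hx.le

end Dominance

lemma sum_ofFn_succ {M : Type*} [AddCommMonoid M] (g : List Bool → M) (t : ℕ) :
    ∑ x : Fin (t + 1) → Bool, g (List.ofFn x) =
      ∑ x : Fin t → Bool, ∑ b : Bool, g (List.ofFn x ++ [b]) := by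
  rw [← (Fin.snocEquiv fun _ => Bool).sum_comp, Fintype.sum_prod_type, sum_comm]
  refine sum_congr rfl fun x _ => sum_congr rfl fun b _ => congrArg g ?_
  simp only [Fin.snocEquiv, Equiv.coe_fn_mk]
  rw [List.ofFn_succ', List.concat_eq_append]
  simp

lemma IsDistr.sum_ofFn {ρ : List Bool → ℝ} (hρ : IsDistr ρ) (t : ℕ) :
    ∑ x : Fin t → Bool, ρ (List.ofFn x) = 1 := by
  induction t with
  | zero => simp [hρ.2.1]
  | succ t ih => simp only [sum_ofFn_succ, Fintype.sum_bool, ← ih, add_comm, ← hρ.2.2]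

lemma sum_mul_log_div_append {μ ξ : List Bool → ℝ} (hμ : IsDistr μ)
    (hdom : ∀ y, 0 < μ y → 0 < ξ y) (x : List Bool) :
    ∑ b : Bool, μ (x ++ [b]) * log (μ (x ++ [b]) / ξ (x ++ [b])) =
      μ x * log (μ x / ξ x) + μ x * instEnt μ ξ x := by
  rcases (hμ.1 x).eq_or_lt with h0 | hx
  · have hsplit := hμ.2.2 x
    have h₀ := hμ.1 (x ++ [false])
    have h₁ := hμ.1 (x ++ [true])
    have hchild : ∀ b, μ (x ++ [b]) = 0 := fun b => by cases b <;> linarith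
    simp [hchild, ← h0]
  have hξx := hdom x hx
  have hterm : ∀ b, μ (x ++ [b]) * log (μ (x ++ [b]) / ξ (x ++ [b])) =
      condP μ x b * (μ x * log (μ x / ξ x))
        + μ x * (condP μ x b * log (condP μ x b / condP ξ x b)) := by
    intro b
    rcases (hμ.1 (x ++ [b])).eq_or_lt with hb0 | hb
    · simp [condP, ← hb0]
    have hξb := hdom _ hb
    rw [show μ (x ++ [b]) / ξ (x ++ [b]) = μ x / ξ x * (condP μ x b / condP ξ x b) by
        simp only [condP]; field_simp,
      log_mul (div_pos hx hξx).ne' (y := condP μ x b / condP ξ x b)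
        (div_pos (div_pos hb hx) (div_pos hξb hξx)).ne']
    simp only [condP]
    field_simp
  have hsum : ∑ b : Bool, condP μ x b = 1 := by
    rw [Fintype.sum_bool, hμ.condP_false hx, add_sub_cancel]
  rw [Fintype.sum_congr _ _ hterm, sum_add_distrib, ← sum_mul, hsum, one_mul, ← mul_sum, instEnt]

lemma totalEnt_eq_sum_mul_log {μ ξ : List Bool → ℝ} (hμ : IsDistr μ) (hξ0 : ξ [] = 1)
    (hdom : ∀ y, 0 < μ y → 0 < ξ y) (n : ℕ) :
    totalEnt μ ξ n =
      ∑ x : Fin n → Bool, μ (List.ofFn x) * log (μ (List.ofFn x) / ξ (List.ofFn x)) := by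
  induction n with
  | zero => simp [totalEnt, hμ.2.1, hξ0]
  | succ n ih =>
    rw [totalEnt, sum_range_succ, ← totalEnt, ih,
      sum_ofFn_succ (fun y => μ y * log (μ y / ξ y)), ← sum_add_distrib]
    exact sum_congr rfl fun x _ => (sum_mul_log_div_append hμ hdom _).symm

lemma totalEnt_le_log {μ ξ : List Bool → ℝ} (hμ : IsDistr μ) (hξ0 : ξ [] = 1) {w₀ : ℝ}
    (hw₀ : 0 < w₀) (hdomw : ∀ y, w₀ * μ y ≤ ξ y) (n : ℕ) :
    totalEnt μ ξ n ≤ log (1 / w₀) := by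
  have hdom : ∀ y, 0 < μ y → 0 < ξ y := fun y hy => (mul_pos hw₀ hy).trans_le (hdomw y)
  rw [totalEnt_eq_sum_mul_log hμ hξ0 hdom]
  calc _ ≤ ∑ x : Fin n → Bool, μ (List.ofFn x) * log (1 / w₀) := by
        refine sum_le_sum fun x _ => ?_
        rcases (hμ.1 (List.ofFn x)).eq_or_lt with h0 | hx
        · simp [← h0]
        · refine mul_le_mul_of_nonneg_left (log_le_log (div_pos hx (hdom _ hx)) ?_) hx.le
          rw [div_le_div_iff₀ (hdom _ hx) hw₀]
          linarith [hdomw (List.ofFn x)]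
    _ = log (1 / w₀) := by rw [← sum_mul, hμ.sum_ofFn, one_mul]

section TotalLoss

variable {μ : List Bool → ℝ} {l : List Bool → Bool → Bool → ℝ}

lemma totalLossG_sub_nonneg (hμ : IsDistr μ) {Y : List Bool → Bool} (hY : IsPredictorG μ l Y)
    (Y' : List Bool → Bool) (n : ℕ) : 0 ≤ totalLossG μ l Y' n - totalLossG μ l Y n := by
  rw [totalLossG, totalLossG, ← sum_sub_distrib]
  refine sum_nonneg fun t _ => ?_
  rw [← sum_sub_distrib]
  exact sum_nonneg fun x _ => by rw [← mul_sub]; exact mul_nonneg (hμ.1 _) (sub_nonneg.2 (hY _ _))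

lemma totalLossG_sub_le_regretBound {ξ : List Bool → ℝ} (hμ : IsDistr μ) (hξ : IsDistr ξ)
    (hdom : ∀ y, 0 < μ y → 0 < ξ y) {lmin lΔ : ℝ} (hlΔ : 0 < lΔ)
    (hl : ∀ x a y, l x a y ∈ Set.Icc lmin (lmin + lΔ)) {Yξ : List Bool → Bool}
    (hYξ : IsPredictorG ξ l Yξ) (Y : List Bool → Bool) (n : ℕ) :
    totalLossG μ l Yξ n - totalLossG μ l Y n ≤
      regretBound lΔ (totalLossG μ l Y n - n * lmin) (totalEnt μ ξ n) := by
  set m : List Bool → ℝ := fun x => μ x * (expLossG μ l x (Y x) - lmin)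
  set a : List Bool → ℝ := fun x => μ x * instEnt μ ξ x
  have hm : ∀ x, 0 ≤ m x := fun x =>
    hμ.mul_nonneg_of_pos fun hx => sub_nonneg.2 (hμ.lmin_le_expLossG hx fun a => (hl _ a _).1)
  have ha : ∀ x, 0 ≤ a x := fun x => hμ.mul_nonneg_of_pos (instEnt_nonneg hμ hξ hdom)
  have hexcess : totalLossG μ l Y n - n * lmin =
      ∑ t ∈ range n, ∑ x : Fin t → Bool, m (List.ofFn x) := by
    simp only [m, totalLossG, mul_sub, sum_sub_distrib, ← sum_mul, hμ.sum_ofFn, one_mul,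
      sum_const, card_range, nsmul_eq_mul]
  rw [hexcess, totalEnt, totalLossG, totalLossG, ← sum_sub_distrib]
  calc _ ≤ ∑ t ∈ range n, regretBound lΔ (∑ x : Fin t → Bool, m (List.ofFn x))
          (∑ x : Fin t → Bool, a (List.ofFn x)) := by
        refine sum_le_sum fun t _ => ?_
        rw [← sum_sub_distrib]
        refine (sum_le_sum fun x _ => ?_).trans
          (sum_regretBound_le _ hlΔ.le (fun x => hm _) (fun x => ha _))
        rw [← mul_sub]
        exact mul_expLossG_sub_le_regretBound hμ hξ hdom hlΔ hl hYξ _ _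
    _ ≤ _ := sum_regretBound_le _ hlΔ.le (fun t => sum_nonneg fun x _ => hm _)
          (fun t => sum_nonneg fun x _ => ha _)

end TotalLoss

theorem general_loss_bound_general {ι : Type*}
    (μs : ι → List Bool → ℝ) (w : ι → ℝ)
    (hμs : ∀ i, IsDistr (μs i)) (hw : ∀ i, 0 < w i) (hw1 : HasSum w 1)
    (ξ : List Bool → ℝ) (hξ : ∀ x, HasSum (fun i => w i * μs i x) (ξ x))
    (i₀ : ι)
    (l : List Bool → Bool → Bool → ℝ) (lmin lΔ : ℝ) (hlΔ : 0 < lΔ)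
    (hl : ∀ x a y, l x a y ∈ Set.Icc lmin (lmin + lΔ))
    (Yμ Yξ : List Bool → Bool)
    (hYμ : IsPredictorG (μs i₀) l Yμ) (hYξ : IsPredictorG ξ l Yξ)
    (n : ℕ) :
    0 ≤ totalLossG (μs i₀) l Yξ n - totalLossG (μs i₀) l Yμ n ∧
    totalLossG (μs i₀) l Yξ n - totalLossG (μs i₀) l Yμ n ≤
      lΔ * totalEnt (μs i₀) ξ n +
        Real.sqrt (4 * (totalLossG (μs i₀) l Yμ n - n * lmin) * lΔ * totalEnt (μs i₀) ξ n
          + lΔ ^ 2 * totalEnt (μs i₀) ξ n ^ 2) ∧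
    totalEnt (μs i₀) ξ n ≤ Real.log (1 / w i₀) := by
  have hξd : IsDistr ξ := isDistr_of_hasSum hμs (fun i => (hw i).le) hw1 hξ
  have hdomw : ∀ x, w i₀ * μs i₀ x ≤ ξ x := fun x =>
    le_hasSum (hξ x) i₀ fun j _ => mul_nonneg (hw j).le ((hμs j).1 x)
  have hdom : ∀ x, 0 < μs i₀ x → 0 < ξ x := fun x hx =>
    (mul_pos (hw i₀) hx).trans_le (hdomw x)
  exact ⟨totalLossG_sub_nonneg (hμs i₀) hYμ Yξ n,
    totalLossG_sub_le_regretBound (hμs i₀) hξd hdom hlΔ hl hYξ Yμ n,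
    totalEnt_le_log (hμs i₀) hξd.2.1 (hw i₀) hdomw n⟩

/-- Theorem 3, general loss bound: with losses in
`[l_min, l_min + l_Δ]`, for every `n ≥ 1`,
`0 ≤ L_{nΛξ} − L_{nΛμ} ≤ l_Δ H_n + √(4(L_{nΛμ} − n l_min) l_Δ H_n + l_Δ² H_n²)`,
where `H_n ≤ ln (1/w_μ)`. -/
theorem general_loss_bound {ι : Type*} [Countable ι]
    (μs : ι → List Bool → ℝ) (w : ι → ℝ)
    (hμs : ∀ i, IsDistr (μs i)) (hw : ∀ i, 0 < w i) (hw1 : HasSum w 1)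
    (ξ : List Bool → ℝ) (hξ : ∀ x, HasSum (fun i => w i * μs i x) (ξ x))
    (i₀ : ι)
    (l : List Bool → Bool → Bool → ℝ) (lmin lΔ : ℝ) (hlΔ : 0 < lΔ)
    (hl : ∀ x a y, l x a y ∈ Set.Icc lmin (lmin + lΔ))
    (Yμ Yξ : List Bool → Bool)
    (hYμ : IsPredictorG (μs i₀) l Yμ) (hYξ : IsPredictorG ξ l Yξ)
    (n : ℕ) (hn : 1 ≤ n) :
    0 ≤ totalLossG (μs i₀) l Yξ n - totalLossG (μs i₀) l Yμ n ∧
    totalLossG (μs i₀) l Yξ n - totalLossG (μs i₀) l Yμ n ≤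
      lΔ * totalEnt (μs i₀) ξ n +
        Real.sqrt (4 * (totalLossG (μs i₀) l Yμ n - n * lmin) * lΔ * totalEnt (μs i₀) ξ n
          + lΔ ^ 2 * totalEnt (μs i₀) ξ n ^ 2) ∧
    totalEnt (μs i₀) ξ n ≤ Real.log (1 / w i₀) :=
  general_loss_bound_general μs w hμs hw hw1 ξ hξ i₀ l lmin lΔ hlΔ hl Yμ Yξ hYμ hYξ n
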